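/- arXiv:1408.5060 — 2 statements merged into one kernel-verified Lean document; each statement's English description precedes it below -/
import Mathlib

section
/- Let λ = 0 and β, γ > 0. Then there exist continuous slowly varying functions l_A, l_B on [1,∞), taking values in [m₊, 1] and [m₋, 1] respectively, such that q_A(t^β) = log{t^β l_A(t)} and q_B(t^γ) = log{t^γ l_B(t)} for all t ≥ 1, and l_A(t) → m₊ and l_B(t) → m₋ as t → ∞. -/
open MeasureTheory Filter Set

noncomputable section

/-- A positive function defined near `+∞` is slowly varying at infinity if
`L(at)/L(t) → 1` as `t → ∞` for every `a > 0`. -/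
def SlowlyVarying (L : ℝ → ℝ) : Prop :=
  (∀ᶠ t in atTop, 0 < L t) ∧
    ∀ a : ℝ, 0 < a → Tendsto (fun t => L (a * t) / L t) atTop (nhds 1)

/-- `N` is a norm on `ℝ²`, viewed as a two-argument function. -/
def IsNorm2 (N : ℝ → ℝ → ℝ) : Prop :=
  (∀ x y, 0 ≤ N x y) ∧ (∀ x y, N x y = 0 ↔ x = 0 ∧ y = 0) ∧
    (∀ c x y, N (c * x) (c * y) = |c| * N x y) ∧
    (∀ x₁ y₁ x₂ y₂, N (x₁ + x₂) (y₁ + y₂) ≤ N x₁ y₁ + N x₂ y₂)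

/-- Condition (C1): symmetry of the norm. -/
def CondC1 (N : ℝ → ℝ → ℝ) : Prop := ∀ x y, N x y = N y x

/-- Condition (C2): the norm dominates the sup-norm. -/
def CondC2 (N : ℝ → ℝ → ℝ) : Prop := ∀ x y : ℝ, max |x| |y| ≤ N x y

/-- Condition (C3): equality with the sup-norm off the diagonal. -/
def CondC3 (N : ℝ → ℝ → ℝ) : Prop :=
  ∃ x₀ y₀ : ℝ, 0 ≤ x₀ ∧ 0 ≤ y₀ ∧ x₀ ≠ y₀ ∧ N x₀ y₀ = max x₀ y₀

/-- τ(v) = ‖(v, 1−v)‖_m / v.  (At `v = 0` this real-valued version takes the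
junk value `0` instead of `+∞`; this is irrelevant for all integrals below,
which are taken against an atomless measure.) -/
def tau (N : ℝ → ℝ → ℝ) (v : ℝ) : ℝ := N v (1 - v) / v

/-- The probability measure associated with a distribution function `F_V` on
`[0,1]` that is continuous (no atoms) and strictly increasing (positive mass on
every nonempty open subinterval of `[0,1]`): Assumption 1. -/
def GoodMeasure (μ : Measure ℝ) : Prop :=
  μ ((Set.Icc (0:ℝ) 1)ᶜ) = 0 ∧ (∀ x : ℝ, μ {x} = 0) ∧
    ∀ a b : ℝ, 0 ≤ a → a < b → b ≤ 1 → 0 < μ (Set.Ioo a b)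

/-- The GP(1,λ) survivor function `(1 + λx)₊^{−1/λ}`, interpreted as `e^{−x}`
when `λ = 0`. -/
def gpTail (l x : ℝ) : ℝ :=
  if l = 0 then Real.exp (-x) else (max (1 + l * x) 0) ^ (-1 / l)

/-- Marginal survival function `S_A(x) = ∫₀¹ (1 + λ x τ(v))₊^{−1/λ} dF_V(v)`. -/
def survA (N : ℝ → ℝ → ℝ) (μ : Measure ℝ) (l x : ℝ) : ℝ :=
  ∫ v, gpTail l (x * tau N v) ∂μ

/-- Marginal survival function `S_B(y) = ∫₀¹ (1 + λ y τ(1−v))₊^{−1/λ} dF_V(v)`. -/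
def survB (N : ℝ → ℝ → ℝ) (μ : Measure ℝ) (l y : ℝ) : ℝ :=
  ∫ v, gpTail l (y * tau N (1 - v)) ∂μ

/-- Joint survival function
`S(x,y) = ∫₀¹ (1 + λ max{x τ(v), y τ(1−v)})₊^{−1/λ} dF_V(v)`. -/
def survJ (N : ℝ → ℝ → ℝ) (μ : Measure ℝ) (l x y : ℝ) : ℝ :=
  ∫ v, gpTail l (max (x * tau N v) (y * tau N (1 - v))) ∂μ

/-- `Ω₀ = {v ∈ [0,1] : τ(v) = 1}`. -/
def Omega0 (N : ℝ → ℝ → ℝ) : Set ℝ := {v | v ∈ Set.Icc (0:ℝ) 1 ∧ tau N v = 1}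

/-- `v′ = inf Ω₀`. -/
def vlo (N : ℝ → ℝ → ℝ) : ℝ := sInf (Omega0 N)

/-- `v″ = sup Ω₀`. -/
def vhi (N : ℝ → ℝ → ℝ) : ℝ := sSup (Omega0 N)

/-- The distribution function `F_V(x) = μ(−∞, x]`. -/
def Fdist (μ : Measure ℝ) (x : ℝ) : ℝ := (μ (Set.Iic x)).toReal

/-- `m₊ = F_V(v″) − F_V(v′)`. -/
def mPlus (N : ℝ → ℝ → ℝ) (μ : Measure ℝ) : ℝ := Fdist μ (vhi N) - Fdist μ (vlo N)

/-- `m₋ = F_V(1−v′) − F_V(1−v″)`. -/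
def mMinus (N : ℝ → ℝ → ℝ) (μ : Measure ℝ) : ℝ :=
  Fdist μ (1 - vlo N) - Fdist μ (1 - vhi N)

open Topology Real

/-!
Write `g = τ - 1` (nonnegative on `(0,1)`) and `L(x) = ∫ exp (-x g) dF_V`. For `λ = 0`,
`S_A(x) = e^{-x} L(x)`, so `e^{q_A(s)} = s L(q_A(s))` and `l_A(t) = L(q_A(t^β))`. As `x → ∞`,
`L(x)` decreases from `1` to `F_V{τ = 1} = m₊` by dominated convergence, and `q_A → ∞`; this
gives the range and the limit of `l_A`. For slow variation, monotonicity of `L` gives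
`0 ≤ q_A(as) - q_A(s) ≤ log a`, and `L(x + d) / L(x) → 1` uniformly for bounded `d ≥ 0`,
because `τ` takes values arbitrarily close to `1` on sets of positive mass (near `v″`).
-/

namespace SlowlyVarying

variable {L : ℝ → ℝ}

lemma of_one_le (hpos : ∀ᶠ t in atTop, 0 < L t)
    (h : ∀ a : ℝ, 1 ≤ a → Tendsto (fun t => L (a * t) / L t) atTop (𝓝 1)) :
    SlowlyVarying L := by
  refine ⟨hpos, fun a ha => ?_⟩
  rcases le_or_gt 1 a with ha1 | ha1
  · exact h a ha1
  have hinv := (h a⁻¹ (one_le_inv₀ ha |>.mpr ha1.le)).comp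
    (tendsto_id.const_mul_atTop ha)
  simpa [Function.comp_def, inv_mul_cancel_left₀ ha.ne'] using hinv.inv₀ one_ne_zero

lemma comp_rpow (hL : SlowlyVarying L) {b : ℝ} (hb : 0 < b) :
    SlowlyVarying fun t => L (t ^ b) := by
  refine ⟨(tendsto_rpow_atTop hb).eventually hL.1, fun a ha => ?_⟩
  refine ((hL.2 (a ^ b) (rpow_pos_of_pos ha b)).comp (tendsto_rpow_atTop hb)).congr' ?_
  filter_upwards [eventually_ge_atTop 0] with t ht
  simp [mul_rpow ha.le ht]

end SlowlyVarying

def IsTailQuantile (S q : ℝ → ℝ) : Prop := ∀ t : ℝ, 1 ≤ t → 0 ≤ q t ∧ S (q t) = 1 / t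

namespace IsTailQuantile

variable {S q : ℝ → ℝ}

lemma monotoneOn (hq : IsTailQuantile S q) (hS : StrictAntiOn S (Ici 0)) :
    MonotoneOn q (Ici 1) := by
  intro t₁ ht₁ t₂ ht₂ h12
  by_contra! h
  have := hS (hq t₂ ht₂).1 (hq t₁ ht₁).1 h
  rw [(hq t₁ ht₁).2, (hq t₂ ht₂).2] at this
  exact this.not_ge (one_div_le_one_div_of_le (zero_lt_one.trans_le ht₁) h12)

lemma tendsto_atTop (hq : IsTailQuantile S q) (hS : StrictAntiOn S (Ici 0))
    (hS0 : ∀ x, 0 ≤ x → 0 < S x) : Tendsto q atTop atTop := by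
  refine Filter.tendsto_atTop.2 fun X => ?_
  have hX : (0 : ℝ) ≤ max X 0 := le_max_right _ _
  filter_upwards [tendsto_inv_atTop_zero.eventually_lt_const (hS0 _ hX),
    eventually_ge_atTop 1] with t hSt ht
  by_contra! h
  have := hS (hq t ht).1 hX (h.trans_le (le_max_left _ _))
  rw [(hq t ht).2, one_div] at this
  linarith

lemma continuousOn (hq : IsTailQuantile S q) (hS : StrictAntiOn S (Ici 0)) :
    ContinuousOn q (Ici 1) := by
  intro t₀ ht₀
  have hinv : Tendsto (fun t : ℝ => 1 / t) (𝓝[Ici 1] t₀) (𝓝 (1 / t₀)) :=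
    continuousWithinAt_const.div continuousWithinAt_id (zero_lt_one.trans_le ht₀).ne'
  obtain ⟨hq₀, hSq₀⟩ := hq t₀ ht₀
  refine tendsto_order.2 ⟨fun c hc => ?_, fun c hc => ?_⟩
  · rcases lt_or_ge c 0 with hc0 | hc0
    · filter_upwards [self_mem_nhdsWithin] with t ht using hc0.trans_le (hq t ht).1
    have hlt : 1 / t₀ < S c := hSq₀ ▸ hS hc0 hq₀ hc
    filter_upwards [hinv.eventually_lt_const hlt, self_mem_nhdsWithin] with t h1 ht
    by_contra! hle
    have := hS.antitoneOn (hq t ht).1 hc0 hle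
    linarith [(hq t ht).2]
  · have hlt : S c < 1 / t₀ := hSq₀ ▸ hS hq₀ (hq₀.trans hc.le) hc
    filter_upwards [hinv.eventually_const_lt hlt, self_mem_nhdsWithin] with t h1 ht
    by_contra! hle
    have := hS.antitoneOn (hq₀.trans hc.le) (hq t ht).1 hle
    linarith [(hq t ht).2]

lemma mul_eq_exp {F : ℝ → ℝ} (hq : IsTailQuantile (fun x => exp (-x) * F x) q)
    {t : ℝ} (ht : 1 ≤ t) : t * F (q t) = exp (q t) := by
  have h : exp (-q t) * F (q t) = 1 / t := (hq t ht).2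
  rw [exp_neg, inv_mul_eq_div, div_eq_div_iff (exp_pos _).ne' (by linarith)] at h
  linarith

end IsTailQuantile

section LaplaceTransform

variable {α : Type*} [MeasurableSpace α] {μ : Measure α} [IsProbabilityMeasure μ] {g : α → ℝ}

def laplaceTransform (μ : Measure α) (g : α → ℝ) (x : ℝ) : ℝ := ∫ a, exp (-(x * g a)) ∂μ

variable (hg : Measurable g) (hg0 : 0 ≤ᵐ[μ] g)
include hg hg0

lemma integrable_exp_neg_mul {x : ℝ} (hx : 0 ≤ x) :
    Integrable (fun a => exp (-(x * g a))) μ := by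
  refine (integrable_const (1 : ℝ)).mono' (by fun_prop) ?_
  filter_upwards [hg0] with a ha
  rw [norm_of_nonneg (exp_pos _).le, exp_le_one_iff, neg_nonpos]
  exact mul_nonneg hx ha

lemma laplaceTransform_pos {x : ℝ} (hx : 0 ≤ x) : 0 < laplaceTransform μ g x :=
  integral_exp_pos (integrable_exp_neg_mul hg hg0 hx)

lemma laplaceTransform_le_one {x : ℝ} (hx : 0 ≤ x) : laplaceTransform μ g x ≤ 1 := by
  refine (integral_mono_ae (integrable_exp_neg_mul hg hg0 hx) (integrable_const 1) ?_).trans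
    (by simp)
  filter_upwards [hg0] with a ha
  exact exp_le_one_iff.2 (neg_nonpos.2 (mul_nonneg hx ha))

lemma laplaceTransform_antitoneOn : AntitoneOn (laplaceTransform μ g) (Ici 0) := by
  intro x hx y hy hxy
  refine integral_mono_ae (integrable_exp_neg_mul hg hg0 hy) (integrable_exp_neg_mul hg hg0 hx) ?_
  filter_upwards [hg0] with a ha
  exact exp_le_exp.2 (neg_le_neg (mul_le_mul_of_nonneg_right hxy ha))

lemma measureReal_eq_zero_le_laplaceTransform {x : ℝ} (hx : 0 ≤ x) :
    μ.real {a | g a = 0} ≤ laplaceTransform μ g x := by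
  have hA : MeasurableSet {a | g a = 0} := hg (measurableSet_singleton 0)
  rw [← integral_indicator_one hA]
  refine integral_mono ((integrable_const 1).indicator hA) (integrable_exp_neg_mul hg hg0 hx)
    fun a => ?_
  by_cases ha : g a = 0
  · simp [ha]
  · simp [Set.indicator_of_notMem (show a ∉ {a | g a = 0} from ha), (exp_pos _).le]

lemma tendsto_laplaceTransform_atTop :
    Tendsto (laplaceTransform μ g) atTop (𝓝 (μ.real {a | g a = 0})) := by
  have hA : MeasurableSet {a | g a = 0} := hg (measurableSet_singleton 0)
  rw [← integral_indicator_one hA]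
  refine tendsto_integral_filter_of_dominated_convergence (fun _ => 1)
    (Eventually.of_forall fun x => by fun_prop) ?_ (integrable_const 1) ?_
  · filter_upwards [eventually_ge_atTop 0] with x hx
    filter_upwards [hg0] with a ha
    rw [norm_of_nonneg (exp_pos _).le]
    exact exp_le_one_iff.2 (neg_nonpos.2 (mul_nonneg hx ha))
  · filter_upwards [hg0] with a ha
    rcases ha.eq_or_lt with ha | ha
    · simp [← ha]
    · rw [Set.indicator_of_notMem (show a ∉ {a | g a = 0} from ha.ne')]
      exact tendsto_exp_atBot.comp
        (tendsto_neg_atTop_atBot.comp (tendsto_id.atTop_mul_const ha))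

lemma measureReal_lt_mul_exp_le_laplaceTransform {x : ℝ} (hx : 0 ≤ x) (ε : ℝ) :
    μ.real {a | g a < ε} * exp (-(x * ε)) ≤ laplaceTransform μ g x := by
  have hA : MeasurableSet {a | g a < ε} := hg measurableSet_Iio
  rw [← smul_eq_mul, ← setIntegral_const]
  refine (setIntegral_mono_on integrableOn_const (integrable_exp_neg_mul hg hg0 hx).integrableOn
    hA fun a ha => ?_).trans (setIntegral_le_integral (integrable_exp_neg_mul hg hg0 hx)
      (Eventually.of_forall fun a => (exp_pos _).le))
  exact exp_le_exp.2 (neg_le_neg (mul_le_mul_of_nonneg_left (le_of_lt ha) hx))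

/-- Splitting at the level `ε`: the part of the integral where `g ≥ ε` is at most
`exp (-x ε)`, while on `{g < ε}` a shift by `d` costs at most a factor `exp (-d ε)`. -/
lemma exp_mul_sub_le_laplaceTransform_add {x d : ℝ} (hx : 0 ≤ x) (hd : 0 ≤ d) (ε : ℝ) :
    exp (-(d * ε)) * (laplaceTransform μ g x - exp (-(x * ε))) ≤
      laplaceTransform μ g (x + d) := by
  set A := {a | g a < ε}
  have hA : MeasurableSet A := hg measurableSet_Iio
  have hix := integrable_exp_neg_mul hg hg0 hx
  have hixd := integrable_exp_neg_mul hg hg0 (add_nonneg hx hd)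
  have hcompl : ∫ a in Aᶜ, exp (-(x * g a)) ∂μ ≤ exp (-(x * ε)) := by
    refine (setIntegral_mono_on hix.integrableOn (integrableOn_const (C := exp (-(x * ε))))
      hA.compl fun a ha => ?_).trans ?_
    · exact exp_le_exp.2 (neg_le_neg (mul_le_mul_of_nonneg_left (not_lt.1 ha) hx))
    · rw [setIntegral_const, smul_eq_mul]
      exact mul_le_of_le_one_left (exp_pos _).le measureReal_le_one
  have hA_shift : exp (-(d * ε)) * ∫ a in A, exp (-(x * g a)) ∂μ ≤
      ∫ a in A, exp (-((x + d) * g a)) ∂μ := by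
    rw [← integral_const_mul]
    refine setIntegral_mono_on (hix.const_mul _).integrableOn hixd.integrableOn hA fun a ha => ?_
    rw [add_mul, neg_add, exp_add, mul_comm]
    exact mul_le_mul_of_nonneg_left
      (exp_le_exp.2 (neg_le_neg (mul_le_mul_of_nonneg_left (le_of_lt ha) hd))) (exp_pos _).le
  calc exp (-(d * ε)) * (laplaceTransform μ g x - exp (-(x * ε)))
      ≤ exp (-(d * ε)) * ∫ a in A, exp (-(x * g a)) ∂μ := by
        gcongr
        rw [laplaceTransform, ← integral_add_compl hA hix]
        linarith
    _ ≤ ∫ a in A, exp (-((x + d) * g a)) ∂μ := hA_shift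
    _ ≤ laplaceTransform μ g (x + d) :=
        setIntegral_le_integral hixd (Eventually.of_forall fun a => (exp_pos _).le)

variable (hpos : ∀ ε > 0, 0 < μ {a | g a < ε})
include hpos

lemma tendsto_exp_div_laplaceTransform {ε : ℝ} (hε : 0 < ε) :
    Tendsto (fun x => exp (-(x * ε)) / laplaceTransform μ g x) atTop (𝓝 0) := by
  set c := μ.real {a | g a < ε / 2}
  have hc : 0 < c := ENNReal.toReal_pos (hpos _ (half_pos hε)).ne' (measure_ne_top μ _)
  have hbound : Tendsto (fun x => exp (-(x * (ε / 2))) / c) atTop (𝓝 0) := by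
    simpa using (tendsto_exp_atBot.comp (tendsto_neg_atTop_atBot.comp
      (tendsto_id.atTop_mul_const (half_pos hε)))).div_const c
  refine tendsto_of_tendsto_of_tendsto_of_le_of_le' tendsto_const_nhds hbound ?_ ?_
  · filter_upwards [eventually_ge_atTop 0] with x hx
    exact div_nonneg (exp_pos _).le (laplaceTransform_pos hg hg0 hx).le
  · filter_upwards [eventually_ge_atTop 0] with x hx
    have hL := measureReal_lt_mul_exp_le_laplaceTransform hg hg0 hx (ε / 2)
    rw [div_le_div_iff₀ (laplaceTransform_pos hg hg0 hx) hc]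
    calc exp (-(x * ε)) * c = exp (-(x * (ε / 2))) * (c * exp (-(x * (ε / 2)))) := by
          rw [mul_left_comm, ← exp_add]; ring_nf
      _ ≤ exp (-(x * (ε / 2))) * laplaceTransform μ g x := by gcongr

/-- The part of `L(x)` coming from `{g ≥ ε}` is `o(L(x))`, so a shift by `d ≤ D` costs at
most a factor `exp (-D ε)`, with `ε` arbitrary. -/
lemma tendsto_laplaceTransform_add_div {β : Type*} {l : Filter β} {x d : β → ℝ} {D : ℝ}
    (hx : Tendsto x l atTop) (hd : ∀ᶠ t in l, 0 ≤ d t ∧ d t ≤ D) :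
    Tendsto (fun t => laplaceTransform μ g (x t + d t) / laplaceTransform μ g (x t)) l (𝓝 1) := by
  have hx0 : ∀ᶠ t in l, 0 ≤ x t := hx.eventually_ge_atTop 0
  refine tendsto_order.2 ⟨fun c hc => ?_, fun c hc => ?_⟩
  · have hexp : Tendsto (fun ε => exp (-(D * ε))) (𝓝[>] 0) (𝓝 1) := by
      have : Continuous fun ε => exp (-(D * ε)) := by fun_prop
      simpa using (this.tendsto 0).mono_left nhdsWithin_le_nhds
    obtain ⟨ε, hcε, hε⟩ :=
      ((hexp.eventually_const_lt hc).and self_mem_nhdsWithin).exists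
    have hr := (tendsto_exp_div_laplaceTransform hg hg0 hpos hε).comp hx
    have hlim : Tendsto (fun t => exp (-(D * ε)) *
        (1 - exp (-(x t * ε)) / laplaceTransform μ g (x t))) l (𝓝 (exp (-(D * ε)))) := by
      simpa using ((tendsto_const_nhds (x := (1 : ℝ))).sub hr).const_mul (exp (-(D * ε)))
    filter_upwards [hlim.eventually_const_lt hcε, hr.eventually_lt_const one_pos, hx0, hd]
      with t hct hrt hxt ⟨hd0, hdD⟩
    have hL : 0 < laplaceTransform μ g (x t) := laplaceTransform_pos hg hg0 hxt
    refine hct.trans_le ?_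
    calc exp (-(D * ε)) * (1 - exp (-(x t * ε)) / laplaceTransform μ g (x t))
        ≤ exp (-(d t * ε)) * (1 - exp (-(x t * ε)) / laplaceTransform μ g (x t)) := by
          gcongr
      _ = exp (-(d t * ε)) * (laplaceTransform μ g (x t) - exp (-(x t * ε))) /
            laplaceTransform μ g (x t) := by field_simp
      _ ≤ _ := by
          gcongr
          exact exp_mul_sub_le_laplaceTransform_add hg hg0 hxt hd0 ε
  · filter_upwards [hx0, hd] with t hxt hdt
    refine lt_of_le_of_lt ?_ hc
    rw [div_le_one (laplaceTransform_pos hg hg0 hxt)]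
    exact laplaceTransform_antitoneOn hg hg0 hxt (add_nonneg hxt hdt.1)
      (le_add_of_nonneg_right hdt.1)

end LaplaceTransform

section TailQuantile

variable {α : Type*} [MeasurableSpace α] {μ : Measure α} [IsProbabilityMeasure μ] {g : α → ℝ}
  {q : ℝ → ℝ}
variable (hg : Measurable g) (hg0 : 0 ≤ᵐ[μ] g)
  (hq : IsTailQuantile (fun x => exp (-x) * laplaceTransform μ g x) q)
include hg hg0

lemma strictAntiOn_exp_neg_mul_laplaceTransform :
    StrictAntiOn (fun x => exp (-x) * laplaceTransform μ g x) (Ici 0) := by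
  intro x hx y hy hxy
  calc exp (-y) * laplaceTransform μ g y < exp (-x) * laplaceTransform μ g y := by
        gcongr
        exact laplaceTransform_pos hg hg0 hy
    _ ≤ exp (-x) * laplaceTransform μ g x := by
        gcongr
        exact laplaceTransform_antitoneOn hg hg0 hx hy hxy.le

include hq

lemma IsTailQuantile.le_add_log {a t : ℝ} (ha : 1 ≤ a) (ht : 1 ≤ t) :
    q (a * t) ≤ q t + log a := by
  have hat : 1 ≤ a * t := one_le_mul_of_one_le_of_one_le ha ht
  have hmono := hq.monotoneOn (strictAntiOn_exp_neg_mul_laplaceTransform hg hg0) (mem_Ici.2 ht)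
    (mem_Ici.2 hat) (le_mul_of_one_le_left (by linarith) ha)
  rw [← exp_le_exp, exp_add, exp_log (by linarith), ← hq.mul_eq_exp hat, ← hq.mul_eq_exp ht,
    mul_assoc, mul_comm (t * _)]
  gcongr
  exact laplaceTransform_antitoneOn hg hg0 (hq t ht).1 (hq _ hat).1 hmono

lemma IsTailQuantile.continuousOn_laplaceTransform :
    ContinuousOn (fun t => laplaceTransform μ g (q t)) (Ici 1) := by
  refine ContinuousOn.congr (f := fun t => exp (q t) / t) ?_ fun t ht => ?_
  · exact (continuous_exp.comp_continuousOn
      (hq.continuousOn (strictAntiOn_exp_neg_mul_laplaceTransform hg hg0))).div continuousOn_id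
      fun t ht => (zero_lt_one.trans_le ht).ne'
  · show _ = exp (q t) / t
    rw [← hq.mul_eq_exp ht, mul_div_cancel_left₀ _ (zero_lt_one.trans_le ht).ne']

lemma IsTailQuantile.tendsto_laplaceTransform :
    Tendsto (fun t => laplaceTransform μ g (q t)) atTop (𝓝 (μ.real {a | g a = 0})) :=
  (tendsto_laplaceTransform_atTop hg hg0).comp (hq.tendsto_atTop
    (strictAntiOn_exp_neg_mul_laplaceTransform hg hg0)
    fun _ hx => mul_pos (exp_pos _) (laplaceTransform_pos hg hg0 hx))

lemma IsTailQuantile.slowlyVarying_laplaceTransform (hpos : ∀ ε > 0, 0 < μ {a | g a < ε}) :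
    SlowlyVarying fun t => laplaceTransform μ g (q t) := by
  refine SlowlyVarying.of_one_le ?_ fun a ha => ?_
  · filter_upwards [eventually_ge_atTop 1] with t ht
    exact laplaceTransform_pos hg hg0 (hq t ht).1
  have hshift := tendsto_laplaceTransform_add_div hg hg0 hpos (d := fun t => q (a * t) - q t)
    (D := log a) (hq.tendsto_atTop (strictAntiOn_exp_neg_mul_laplaceTransform hg hg0)
      fun _ hx => mul_pos (exp_pos _) (laplaceTransform_pos hg hg0 hx)) ?_
  · simpa using hshift
  filter_upwards [eventually_ge_atTop 1] with t ht
  have hat : 1 ≤ a * t := one_le_mul_of_one_le_of_one_le ha ht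
  exact ⟨sub_nonneg.2 (hq.monotoneOn (strictAntiOn_exp_neg_mul_laplaceTransform hg hg0)
    (mem_Ici.2 ht) (mem_Ici.2 hat) (le_mul_of_one_le_left (by linarith) ha)),
    by linarith [hq.le_add_log hg hg0 ha ht]⟩

end TailQuantile

section NormGeometry

variable {N : ℝ → ℝ → ℝ}

lemma IsNorm2.apply_le (hN : IsNorm2 N) (u w : ℝ) : N u w ≤ |u| * N 1 0 + |w| * N 0 1 := by
  obtain ⟨-, -, hhom, htri⟩ := hN
  calc N u w = N (u * 1 + w * 0) (u * 0 + w * 1) := by simp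
    _ ≤ N (u * 1) (u * 0) + N (w * 0) (w * 1) := htri _ _ _ _
    _ = |u| * N 1 0 + |w| * N 0 1 := by rw [hhom, hhom]

lemma IsNorm2.continuous_one_sub (hN : IsNorm2 N) : Continuous fun v => N v (1 - v) := by
  set K := N 1 0 + N 0 1
  have hK : 0 ≤ K := add_nonneg (hN.1 1 0) (hN.1 0 1)
  have key : ∀ v w : ℝ, N v (1 - v) - N w (1 - w) ≤ K * |v - w| := fun v w => by
    have htri := hN.2.2.2 w (1 - w) (v - w) (w - v)
    have hle := hN.apply_le (v - w) (w - v)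
    rw [abs_sub_comm w v] at hle
    rw [add_sub_cancel, sub_add_sub_cancel] at htri
    linarith
  refine (LipschitzWith.of_dist_le_mul (K := K.toNNReal) fun v w => ?_).continuous
  rw [Real.dist_eq, Real.dist_eq, Real.coe_toNNReal _ hK, abs_sub_le_iff]
  exact ⟨key v w, abs_sub_comm v w ▸ key w v⟩

lemma one_le_tau (hC2 : CondC2 N) {v : ℝ} (hv : 0 < v) : 1 ≤ tau N v := by
  rw [tau, le_div_iff₀ hv, one_mul]
  exact (le_abs_self v).trans ((le_max_left _ _).trans (hC2 v (1 - v)))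

lemma mem_omega0_iff (hC2 : CondC2 N) {v : ℝ} :
    v ∈ Omega0 N ↔ v ∈ Icc (1 / 2 : ℝ) 1 ∧ N v (1 - v) = v := by
  constructor
  · rintro ⟨⟨hv0, hv1⟩, hτ⟩
    have hv : v ≠ 0 := by rintro rfl; simp [tau] at hτ
    rw [tau, div_eq_one_iff_eq hv] at hτ
    have := (le_max_right _ _).trans (hC2 v (1 - v))
    rw [hτ, abs_of_nonneg (by linarith)] at this
    exact ⟨⟨by linarith, hv1⟩, hτ⟩
  · rintro ⟨⟨hv2, hv1⟩, hNv⟩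
    exact ⟨⟨by linarith, hv1⟩, by rw [tau, hNv, div_self (by linarith)]⟩

/-- A point `(x₀, y₀)` given by (C3) is rescaled onto the segment `x + y = 1`. -/
lemma omega0_nonempty (hN : IsNorm2 N) (hC1 : CondC1 N) (hC3 : CondC3 N) :
    (Omega0 N).Nonempty := by
  have key : ∀ x y : ℝ, 0 ≤ y → y < x → N x y = max x y → (Omega0 N).Nonempty := by
    intro x y hy hxy hNxy
    have hs : 0 < x + y := by linarith
    have hx : 0 < x / (x + y) := div_pos (by linarith) hs
    refine ⟨x / (x + y), ⟨hx.le, (div_le_one hs).2 (by linarith)⟩, ?_⟩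
    have h1 : 1 - x / (x + y) = (x + y)⁻¹ * y := by field_simp; ring
    rw [tau, h1, div_eq_inv_mul x, hN.2.2.1, abs_of_pos (inv_pos.2 hs), hNxy,
      max_eq_left hxy.le, div_self (div_eq_inv_mul x _ ▸ hx.ne')]
  obtain ⟨x₀, y₀, hx₀, hy₀, hne, hmax⟩ := hC3
  rcases hne.lt_or_gt with h | h
  · exact key y₀ x₀ hx₀ h (by rw [hC1, hmax, max_comm])
  · exact key x₀ y₀ hy₀ h hmax

lemma convex_omega0 (hN : IsNorm2 N) (hC2 : CondC2 N) : Convex ℝ (Omega0 N) := by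
  intro v hv w hw s r hs hr hsr
  obtain ⟨⟨hv2, hv1⟩, hNv⟩ := (mem_omega0_iff hC2).1 hv
  obtain ⟨⟨hw2, hw1⟩, hNw⟩ := (mem_omega0_iff hC2).1 hw
  simp only [smul_eq_mul]
  have hsum : 1 - (s * v + r * w) = s * (1 - v) + r * (1 - w) := by
    linear_combination -hsr
  refine (mem_omega0_iff hC2).2 ⟨⟨by nlinarith, by nlinarith⟩, le_antisymm ?_ ?_⟩
  · calc N (s * v + r * w) (1 - (s * v + r * w))
        ≤ N (s * v) (s * (1 - v)) + N (r * w) (r * (1 - w)) := hsum ▸ hN.2.2.2 _ _ _ _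
      _ = s * v + r * w := by
          rw [hN.2.2.1, hN.2.2.1, abs_of_nonneg hs, abs_of_nonneg hr, hNv, hNw]
  · exact (le_abs_self _).trans ((le_max_left _ _).trans (hC2 _ _))

lemma isClosed_omega0 (hN : IsNorm2 N) (hC2 : CondC2 N) : IsClosed (Omega0 N) := by
  have : Omega0 N = Icc (1 / 2 : ℝ) 1 ∩ {v | N v (1 - v) = v} :=
    Set.ext fun v => mem_omega0_iff hC2
  rw [this]
  exact isClosed_Icc.inter (isClosed_eq hN.continuous_one_sub continuous_id)

lemma omega0_eq_Icc (hN : IsNorm2 N) (hC1 : CondC1 N) (hC2 : CondC2 N) (hC3 : CondC3 N) :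
    Omega0 N = Icc (vlo N) (vhi N) := by
  have hne := omega0_nonempty hN hC1 hC3
  have hbdd : BddBelow (Omega0 N) ∧ BddAbove (Omega0 N) :=
    ⟨⟨0, fun v hv => hv.1.1⟩, ⟨1, fun v hv => hv.1.2⟩⟩
  refine (Set.Subset.antisymm (fun v hv => ⟨csInf_le hbdd.1 hv, le_csSup hbdd.2 hv⟩) ?_)
  exact (convex_omega0 hN hC2).ordConnected.out
    ((isClosed_omega0 hN hC2).csInf_mem hne hbdd.1)
    ((isClosed_omega0 hN hC2).csSup_mem hne hbdd.2)

end NormGeometry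

section Measure

variable {μ : Measure ℝ}

lemma GoodMeasure.ae_mem_Ioo (hμ : GoodMeasure μ) : ∀ᵐ v ∂μ, v ∈ Ioo (0 : ℝ) 1 := by
  filter_upwards [(Ioo_ae_eq_Icc' (hμ.2.1 0) (hμ.2.1 1)).mem_iff,
    measure_eq_zero_iff_ae_notMem.1 hμ.1] with v hv hv'
  exact hv.2 (not_not.1 hv')

lemma GoodMeasure.measureReal_Icc [IsFiniteMeasure μ] (hμ : GoodMeasure μ) {a b : ℝ}
    (hab : a ≤ b) :
    μ.real (Icc a b) = Fdist μ b - Fdist μ a := by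
  have h := measureReal_union (μ := μ) (Iic_disjoint_Ioc (le_refl a) (c := b)) measurableSet_Ioc
  rw [Iic_union_Ioc_eq_Iic hab] at h
  rw [← measureReal_congr (Ioc_ae_eq_Icc' (hμ.2.1 a)), Fdist, Fdist, ← measureReal_def,
    ← measureReal_def, h]
  ring

lemma GoodMeasure.map_one_sub (hμ : GoodMeasure μ) : GoodMeasure (μ.map fun v => 1 - v) := by
  have hemb := measurableEmbedding_subLeft (1 : ℝ)
  refine ⟨?_, fun x => ?_, fun a b ha hab hb => ?_⟩
  · rw [hemb.map_apply]; simpa using hμ.1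
  · have : (fun v : ℝ => 1 - v) ⁻¹' {x} = {1 - x} := by
      ext v; simp only [mem_preimage, mem_singleton_iff]; constructor <;> intro h <;> linarith
    rw [hemb.map_apply, this, hμ.2.1]
  · rw [hemb.map_apply]
    simpa using hμ.2.2 (1 - b) (1 - a) (by linarith) (by linarith) (by linarith)

lemma Fdist_map_one_sub [IsProbabilityMeasure μ] (hμ : GoodMeasure μ) (x : ℝ) :
    Fdist (μ.map fun v => 1 - v) x = 1 - Fdist μ (1 - x) := by
  rw [Fdist, (measurableEmbedding_subLeft (1 : ℝ)).map_apply, ← measureReal_def]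
  simp only [preimage_const_sub_Iic, ← compl_Iio]
  rw [measureReal_compl measurableSet_Iio, probReal_univ,
    measureReal_congr (Iio_ae_eq_Iic' (hμ.2.1 (1 - x))), Fdist, measureReal_def]

lemma mMinus_eq_mPlus_map [IsProbabilityMeasure μ] (hμ : GoodMeasure μ) (N : ℝ → ℝ → ℝ) :
    mMinus N μ = mPlus N (μ.map fun v => 1 - v) := by
  simp only [mMinus, mPlus, Fdist_map_one_sub hμ]
  ring

lemma survB_eq_survA_map (N : ℝ → ℝ → ℝ) (l y : ℝ) :
    survB N μ l y = survA N (μ.map fun v => 1 - v) l y :=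
  ((measurableEmbedding_subLeft (1 : ℝ)).integral_map fun v => gpTail l (y * tau N v)).symm

end Measure

section MarginalQuantile

variable {N : ℝ → ℝ → ℝ} {μ : Measure ℝ}

lemma survA_zero_eq (N : ℝ → ℝ → ℝ) (μ : Measure ℝ) (x : ℝ) :
    survA N μ 0 x = exp (-x) * laplaceTransform μ (fun v => tau N v - 1) x := by
  rw [survA, laplaceTransform, ← integral_const_mul]
  congr 1 with v
  rw [gpTail, if_pos rfl, ← exp_add]
  ring_nf

variable (hN : IsNorm2 N) (hC1 : CondC1 N) (hC2 : CondC2 N) (hC3 : CondC3 N)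
  (hμ : GoodMeasure μ)
include hN hC1 hC2 hC3 hμ

lemma mPlus_eq_measureReal [IsFiniteMeasure μ] : mPlus N μ = μ.real {v | tau N v - 1 = 0} := by
  have hΩ := omega0_eq_Icc hN hC1 hC2 hC3
  have hle : vlo N ≤ vhi N := nonempty_Icc.1 (hΩ ▸ omega0_nonempty hN hC1 hC3)
  have h : {v | tau N v - 1 = 0} ∩ Icc 0 1 = Omega0 N := by
    ext v; simp [Omega0, sub_eq_zero, and_comm]
  rw [mPlus, ← hμ.measureReal_Icc hle, ← hΩ, ← h, measureReal_def, measureReal_def,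
    measure_inter_conull hμ.1]

/-- `τ` is continuous at `v″ > 0` with `τ(v″) = 1`, so it is close to `1` on an interval
to the left of `v″`, which has positive mass. -/
lemma measure_tau_sub_one_lt_pos {ε : ℝ} (hε : 0 < ε) : 0 < μ {v | tau N v - 1 < ε} := by
  have hΩ := omega0_eq_Icc hN hC1 hC2 hC3
  have hmem : vhi N ∈ Omega0 N :=
    hΩ ▸ right_mem_Icc.2 (nonempty_Icc.1 (hΩ ▸ omega0_nonempty hN hC1 hC3))
  obtain ⟨⟨hhalf, h1⟩, -⟩ := (mem_omega0_iff hC2).1 hmem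
  have hcont : ContinuousAt (tau N) (vhi N) :=
    hN.continuous_one_sub.continuousAt.div continuousAt_id (by linarith)
  have hnhds : {v | tau N v - 1 < ε} ∈ 𝓝 (vhi N) := by
    have := hcont.tendsto.sub_const 1
    rw [hmem.2, sub_self] at this
    exact this.eventually_lt_const hε
  obtain ⟨l, hl, hsub⟩ := exists_Ioc_subset_of_mem_nhds' hnhds (by linarith : (0 : ℝ) < vhi N)
  exact (hμ.2.2 l (vhi N) hl.1 hl.2 h1).trans_le (measure_mono (Ioo_subset_Ioc_self.trans hsub))

lemma exists_slowlyVarying_of_survA [IsProbabilityMeasure μ] {b : ℝ} (hb : 0 < b) {q : ℝ → ℝ}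
    (hq : IsTailQuantile (survA N μ 0) q) :
    ∃ l : ℝ → ℝ, ContinuousOn l (Ici 1) ∧ (∀ t : ℝ, 1 ≤ t → l t ∈ Icc (mPlus N μ) 1) ∧
      SlowlyVarying l ∧ (∀ t : ℝ, 1 ≤ t → q (t ^ b) = log (t ^ b * l t)) ∧
      Tendsto l atTop (𝓝 (mPlus N μ)) := by
  set g := fun v => tau N v - 1
  have hg : Measurable g := (hN.continuous_one_sub.measurable.div measurable_id).sub_const 1
  have hg0 : 0 ≤ᵐ[μ] g := by
    filter_upwards [hμ.ae_mem_Ioo] with v hv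
    exact sub_nonneg.2 (one_le_tau hC2 hv.1)
  have hq' : IsTailQuantile (fun x => exp (-x) * laplaceTransform μ g x) q := by
    simpa only [IsTailQuantile, survA_zero_eq] using hq
  have hm := mPlus_eq_measureReal hN hC1 hC2 hC3 hμ
  have hpow : ∀ t : ℝ, 1 ≤ t → 1 ≤ t ^ b := fun t ht => one_le_rpow ht hb.le
  refine ⟨fun t => laplaceTransform μ g (q (t ^ b)), ?_, fun t ht => ?_,
    (hq'.slowlyVarying_laplaceTransform hg hg0
      fun ε hε => measure_tau_sub_one_lt_pos hN hC1 hC2 hC3 hμ hε).comp_rpow hb,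
    fun t ht => ?_, ?_⟩
  · exact (hq'.continuousOn_laplaceTransform hg hg0).comp
      (continuousOn_id.rpow_const fun _ _ => Or.inr hb.le) fun t ht => hpow t ht
  · rw [hm]
    exact ⟨measureReal_eq_zero_le_laplaceTransform hg hg0 (hq _ (hpow t ht)).1,
      laplaceTransform_le_one hg hg0 (hq _ (hpow t ht)).1⟩
  · rw [hq'.mul_eq_exp (hpow t ht), log_exp]
  · rw [hm]
    exact (hq'.tendsto_laplaceTransform hg hg0).comp (tendsto_rpow_atTop hb)

end MarginalQuantile

/-- Proposition 7: for `λ = 0` and `β, γ > 0`, there exist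
continuous slowly varying `l_A, l_B` on `[1,∞)` with values in `[m₊,1]` resp.
`[m₋,1]`, such that `q_A(t^β) = log(t^β l_A(t))`, `q_B(t^γ) = log(t^γ l_B(t))`
for all `t ≥ 1`, and `l_A(t) → m₊`, `l_B(t) → m₋`. -/
theorem stmt4 (N : ℝ → ℝ → ℝ) (hN : IsNorm2 N) (hC1 : CondC1 N) (hC2 : CondC2 N)
    (hC3 : CondC3 N) (μ : Measure ℝ) [IsProbabilityMeasure μ] (hμ : GoodMeasure μ)
    (β γ : ℝ) (hβ : 0 < β) (hγ : 0 < γ) (qA qB : ℝ → ℝ)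
    (hqA : ∀ t : ℝ, 1 ≤ t → 0 ≤ qA t ∧ survA N μ 0 (qA t) = 1 / t)
    (hqB : ∀ t : ℝ, 1 ≤ t → 0 ≤ qB t ∧ survB N μ 0 (qB t) = 1 / t) :
    ∃ lA lB : ℝ → ℝ,
      ContinuousOn lA (Set.Ici 1) ∧ ContinuousOn lB (Set.Ici 1) ∧
      (∀ t : ℝ, 1 ≤ t → lA t ∈ Set.Icc (mPlus N μ) 1) ∧
      (∀ t : ℝ, 1 ≤ t → lB t ∈ Set.Icc (mMinus N μ) 1) ∧
      SlowlyVarying lA ∧ SlowlyVarying lB ∧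
      (∀ t : ℝ, 1 ≤ t → qA (t ^ β) = Real.log (t ^ β * lA t)) ∧
      (∀ t : ℝ, 1 ≤ t → qB (t ^ γ) = Real.log (t ^ γ * lB t)) ∧
      Tendsto lA atTop (nhds (mPlus N μ)) ∧
      Tendsto lB atTop (nhds (mMinus N μ)) := by
  obtain ⟨lA, hAcont, hAmem, hAsv, hAlog, hAlim⟩ :=
    exists_slowlyVarying_of_survA hN hC1 hC2 hC3 hμ hβ hqA
  -- The `B` margin is the `A` margin for the law of `1 - V`.
  have : IsProbabilityMeasure (μ.map fun v => 1 - v) :=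
    Measure.isProbabilityMeasure_map (by fun_prop)
  obtain ⟨lB, hBcont, hBmem, hBsv, hBlog, hBlim⟩ :=
    exists_slowlyVarying_of_survA hN hC1 hC2 hC3 hμ.map_one_sub hγ (q := qB)
      (by simpa only [IsTailQuantile, survB_eq_survA_map] using hqB)
  rw [mMinus_eq_mPlus_map hμ N]
  exact ⟨lA, lB, hAcont, hBcont, hAmem, hBmem, hAsv, hBsv, hAlog, hBlog, hAlim, hBlim⟩
end
end

section
/- Under Conditions (C1)–(C3) on the norm ‖·‖_m: the set Ω₀ = {v ∈ [0,1] : τ(v) = 1} is a nonempty closed subinterval [v′, v″] of [1/2, 1] with v″ > 1/2; τ(v) > 1 for every v < 1/2; and τ is strictly decreasing on [0, v′] and strictly increasing on [v″, 1]. -/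
open Set

open scoped ENNReal

noncomputable section

/-- The extended-real-valued function `τ : [0,1] → [1,∞]`,
`τ(v) = ‖(v, 1−v)‖_m / v`, with `τ(0) = +∞`. -/
def tauE (N : ℝ → ℝ → ℝ) (v : ℝ) : ℝ≥0∞ :=
  if v = 0 then ⊤ else ENNReal.ofReal (N v (1 - v) / v)

/-- `Ω₀ = {v ∈ [0,1] : τ(v) = 1}`. -/
def Omega0E (N : ℝ → ℝ → ℝ) : Set ℝ := {v | v ∈ Set.Icc (0:ℝ) 1 ∧ tauE N v = 1}

/-!
Both `g(v) = ‖(v, 1 - v)‖` and `h(w) = ‖(1, w)‖` are convex. By (C2), `g(v) ≥ max(v, 1 - v)`, so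
`Ω₀` is the sublevel set `{v ∈ [1/2, 1] : g(v) ≤ v}`, a closed interval; (C3), made to have
`x₀ > y₀` by (C1), puts `x₀ / (x₀ + y₀) > 1/2` in it. By homogeneity `τ(v) = h(1/v - 1)`, and
`h ≥ 1` equals `1` exactly on `[1/v″ - 1, 1/v′ - 1]`; a convex function is strictly monotone on
either side of an interval of minima.
-/

section Convex

variable {f : ℝ → ℝ} {s : Set ℝ} {b : ℝ}

lemma ConvexOn.strictMonoOn_inter_Ici (hf : ConvexOn ℝ s f) (hb : b ∈ s)
    (hlt : ∀ x ∈ s, b < x → f b < f x) : StrictMonoOn f (s ∩ Ici b) := by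
  rintro x ⟨hxs, hbx : b ≤ x⟩ y ⟨hys, -⟩ hxy
  rcases hbx.eq_or_lt with rfl | hbx
  · exact hlt y hys hxy
  · refine hf.lt_right_of_left_lt hb hys ?_ (hlt x hxs hbx)
    rw [openSegment_eq_Ioo (hbx.trans hxy)]
    exact ⟨hbx, hxy⟩

lemma ConvexOn.strictAntiOn_inter_Iic (hf : ConvexOn ℝ s f) (hb : b ∈ s)
    (hlt : ∀ x ∈ s, x < b → f b < f x) : StrictAntiOn f (s ∩ Iic b) := by
  rintro x ⟨hxs, -⟩ y ⟨hys, hyb : y ≤ b⟩ hxy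
  rcases hyb.eq_or_lt with rfl | hyb
  · exact hlt x hxs hxy
  · refine hf.lt_left_of_right_lt hxs hb ?_ (hlt y hys hyb)
    rw [openSegment_eq_Ioo (hxy.trans hyb)]
    exact ⟨hxy, hyb⟩

end Convex

variable {N : ℝ → ℝ → ℝ}

namespace IsNorm2

lemma map_mul_of_nonneg (hN : IsNorm2 N) {c : ℝ} (hc : 0 ≤ c) (x y : ℝ) :
    N (c * x) (c * y) = c * N x y := by
  rw [hN.2.2.1, abs_of_nonneg hc]

lemma convexOn_line (hN : IsNorm2 N) (a b c d : ℝ) :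
    ConvexOn ℝ univ (fun t => N (a + t * b) (c + t * d)) := by
  refine ⟨convex_univ, fun x _ y _ p q hp hq hpq => ?_⟩
  simp only [smul_eq_mul]
  calc N (a + (p * x + q * y) * b) (c + (p * x + q * y) * d)
      = N (p * (a + x * b) + q * (a + y * b)) (p * (c + x * d) + q * (c + y * d)) := by
        congr 1
        · linear_combination (-a) * hpq
        · linear_combination (-c) * hpq
    _ ≤ N (p * (a + x * b)) (p * (c + x * d)) + N (q * (a + y * b)) (q * (c + y * d)) :=
        hN.2.2.2 _ _ _ _
    _ = p * N (a + x * b) (c + x * d) + q * N (a + y * b) (c + y * d) := by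
        rw [hN.map_mul_of_nonneg hp, hN.map_mul_of_nonneg hq]

lemma convexOn_apply_one (hN : IsNorm2 N) : ConvexOn ℝ univ (fun w => N 1 w) := by
  simpa using hN.convexOn_line 1 0 0 1

lemma convexOn_apply_sub (hN : IsNorm2 N) : ConvexOn ℝ univ (fun v => N v (1 - v)) := by
  convert hN.convexOn_line 0 1 1 (-1) using 3 <;> ring

lemma apply_eq_mul_apply_one (hN : IsNorm2 N) {v : ℝ} (hv : 0 < v) :
    N v (1 - v) = v * N 1 (v⁻¹ - 1) := by
  rw [← hN.map_mul_of_nonneg hv.le, mul_one, mul_sub, mul_inv_cancel₀ hv.ne', mul_one]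

end IsNorm2

lemma CondC2.one_le_apply_one (hC2 : CondC2 N) (w : ℝ) : 1 ≤ N 1 w :=
  (le_max_of_le_left (abs_one (α := ℝ)).ge).trans (hC2 1 w)

lemma CondC2.sub_le_apply (hC2 : CondC2 N) (v : ℝ) : 1 - v ≤ N v (1 - v) :=
  (le_max_of_le_right (le_abs_self _)).trans (hC2 v (1 - v))

lemma tauE_of_pos (hN : IsNorm2 N) {v : ℝ} (hv : 0 < v) :
    tauE N v = ENNReal.ofReal (N 1 (v⁻¹ - 1)) := by
  rw [tauE, if_neg hv.ne', hN.apply_eq_mul_apply_one hv, mul_div_cancel_left₀ _ hv.ne']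

lemma tauE_lt_tauE_iff (hN : IsNorm2 N) (hC2 : CondC2 N) {a b : ℝ} (ha : 0 < a) (hb : 0 < b) :
    tauE N a < tauE N b ↔ N 1 (a⁻¹ - 1) < N 1 (b⁻¹ - 1) := by
  rw [tauE_of_pos hN ha, tauE_of_pos hN hb,
    ENNReal.ofReal_lt_ofReal_iff (one_pos.trans_le (hC2.one_le_apply_one _))]

lemma one_lt_tauE_of_lt_half (hC2 : CondC2 N) {v : ℝ} (hv : 0 ≤ v) (hv2 : v < 1 / 2) :
    1 < tauE N v := by
  rcases hv.eq_or_lt with rfl | hv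
  · simp [tauE]
  · rw [tauE, if_neg hv.ne', ENNReal.one_lt_ofReal, one_lt_div hv]
    linarith [hC2.sub_le_apply v]

lemma mem_Omega0E_iff_of_pos (hN : IsNorm2 N) {v : ℝ} (hv : 0 < v) :
    v ∈ Omega0E N ↔ v ≤ 1 ∧ N 1 (v⁻¹ - 1) = 1 := by
  rw [Omega0E, mem_ofPred_eq, tauE_of_pos hN hv, ENNReal.ofReal_eq_one]
  exact ⟨fun h => ⟨h.1.2, h.2⟩, fun h => ⟨⟨hv.le, h.1⟩, h.2⟩⟩

lemma inv_one_add_mem_Omega0E (hN : IsNorm2 N) {w : ℝ} (hw : 0 ≤ w) (h : N 1 w = 1) :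
    (1 + w)⁻¹ ∈ Omega0E N := by
  rw [mem_Omega0E_iff_of_pos hN (by positivity), inv_inv, add_sub_cancel_left]
  exact ⟨inv_le_one_of_one_le₀ (by linarith), h⟩

lemma Omega0E_eq_inter (hC2 : CondC2 N) :
    Omega0E N = Icc (1 / 2) 1 ∩ {v | N v (1 - v) ≤ v} := by
  ext v
  simp only [Omega0E, mem_ofPred_eq, mem_inter_iff, mem_Icc]
  have hle := hC2.sub_le_apply v
  constructor
  · rintro ⟨⟨hv0, hv1⟩, hτ⟩
    rcases hv0.eq_or_lt with rfl | hv0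
    · simp [tauE] at hτ
    rw [tauE, if_neg hv0.ne', ENNReal.ofReal_eq_one, div_eq_one_iff_eq hv0.ne'] at hτ
    exact ⟨⟨by linarith, hv1⟩, hτ.le⟩
  · rintro ⟨⟨hv2, hv1⟩, hNv⟩
    have hv0 : 0 < v := by linarith
    have hge : v ≤ N v (1 - v) := (le_max_of_le_left (le_abs_self v)).trans (hC2 v (1 - v))
    refine ⟨⟨hv0.le, hv1⟩, ?_⟩
    rw [tauE, if_neg hv0.ne', le_antisymm hNv hge, div_self hv0.ne', ENNReal.ofReal_one]

lemma Omega0E_subset_Icc (hC2 : CondC2 N) : Omega0E N ⊆ Icc (1 / 2) 1 :=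
  (Omega0E_eq_inter hC2).trans_subset inter_subset_left

lemma isClosed_Omega0E (hN : IsNorm2 N) (hC2 : CondC2 N) : IsClosed (Omega0E N) := by
  have hcont : Continuous (fun v => N v (1 - v)) := by
    simpa [continuousOn_univ] using hN.convexOn_apply_sub.continuousOn_interior
  rw [Omega0E_eq_inter hC2]
  exact isClosed_Icc.inter (isClosed_le hcont continuous_id)

lemma convex_Omega0E (hN : IsNorm2 N) (hC2 : CondC2 N) : Convex ℝ (Omega0E N) := by
  have hsub := (hN.convexOn_apply_sub.sub (concaveOn_id convex_univ)).convex_le 0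
  rw [Omega0E_eq_inter hC2]
  exact (convex_Icc _ _).inter (by simpa [sub_nonpos] using hsub)

lemma exists_mem_Omega0E_half_lt (hN : IsNorm2 N) (hC1 : CondC1 N) (hC2 : CondC2 N)
    (hC3 : CondC3 N) : ∃ v ∈ Omega0E N, 1 / 2 < v := by
  obtain ⟨x₀, y₀, hx, hy, hne, hmax⟩ := hC3
  wlog hlt : y₀ < x₀ generalizing x₀ y₀
  · exact this y₀ x₀ hy hx hne.symm (by rw [hC1, hmax, max_comm])
      (hne.lt_or_gt.resolve_right hlt)
  have hs : 0 < x₀ + y₀ := by linarith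
  have hsub : 1 - x₀ / (x₀ + y₀) = (x₀ + y₀)⁻¹ * y₀ := by field_simp; ring
  have hv : N (x₀ / (x₀ + y₀)) (1 - x₀ / (x₀ + y₀)) = x₀ / (x₀ + y₀) := by
    rw [hsub, div_eq_inv_mul, hN.map_mul_of_nonneg (inv_pos.2 hs).le, hmax, max_eq_left hlt.le]
  refine ⟨x₀ / (x₀ + y₀), ?_, by rw [lt_div_iff₀ hs]; linarith⟩
  rw [Omega0E_eq_inter hC2]
  refine ⟨⟨?_, ?_⟩, hv.le⟩
  · rw [le_div_iff₀ hs]; linarith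
  · rw [div_le_one hs]; linarith

lemma strictAntiOn_tauE_of_isLeast (hN : IsNorm2 N) (hC2 : CondC2 N) {v' : ℝ}
    (hv' : IsLeast (Omega0E N) v') : StrictAntiOn (tauE N) (Icc 0 v') := by
  have hv'0 : 0 < v' := by linarith [(Omega0E_subset_Icc hC2 hv'.1).1]
  have hβ : N 1 (v'⁻¹ - 1) = 1 := ((mem_Omega0E_iff_of_pos hN hv'0).1 hv'.1).2
  have hlt : ∀ w ∈ univ, v'⁻¹ - 1 < w → N 1 (v'⁻¹ - 1) < N 1 w := by
    intro w _ hw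
    rw [hβ]
    refine (hC2.one_le_apply_one w).lt_of_ne fun h => ?_
    have hw0 : 0 ≤ w := by linarith [one_le_inv₀ hv'0 |>.2 (Omega0E_subset_Icc hC2 hv'.1).2]
    have := hv'.2 (inv_one_add_mem_Omega0E hN hw0 h.symm)
    rw [le_inv_comm₀ hv'0 (by positivity)] at this
    linarith
  have hmono := hN.convexOn_apply_one.strictMonoOn_inter_Ici (mem_univ _) hlt
  intro a ha b hb hab
  rcases ha.1.eq_or_lt with rfl | ha0
  · simp [tauE, (ha.1.trans_lt hab).ne']
  have hb0 := ha0.trans hab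
  rw [tauE_lt_tauE_iff hN hC2 hb0 ha0]
  exact hmono ⟨mem_univ _, by simpa using inv_anti₀ hb0 hb.2⟩
    ⟨mem_univ _, by simpa using (inv_anti₀ hb0 hb.2).trans (inv_anti₀ ha0 hab.le)⟩
    (by simpa using inv_strictAnti₀ ha0 hab)

lemma strictMonoOn_tauE_of_isGreatest (hN : IsNorm2 N) (hC2 : CondC2 N) {v'' : ℝ}
    (hv'' : IsGreatest (Omega0E N) v'') : StrictMonoOn (tauE N) (Icc v'' 1) := by
  have hv''0 : 0 < v'' := by linarith [(Omega0E_subset_Icc hC2 hv''.1).1]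
  have hα : N 1 (v''⁻¹ - 1) = 1 := ((mem_Omega0E_iff_of_pos hN hv''0).1 hv''.1).2
  have hlt : ∀ w ∈ Ici (0 : ℝ), w < v''⁻¹ - 1 → N 1 (v''⁻¹ - 1) < N 1 w := by
    intro w (hw0 : 0 ≤ w) hw
    rw [hα]
    refine (hC2.one_le_apply_one w).lt_of_ne fun h => ?_
    have := hv''.2 (inv_one_add_mem_Omega0E hN hw0 h.symm)
    rw [inv_le_comm₀ (by positivity) hv''0] at this
    linarith
  have hα0 : v''⁻¹ - 1 ∈ Ici (0 : ℝ) := by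
    simpa using one_le_inv₀ hv''0 |>.2 (Omega0E_subset_Icc hC2 hv''.1).2
  have hconvex : ConvexOn ℝ (Ici 0) (fun w => N 1 w) :=
    hN.convexOn_apply_one.subset (subset_univ _) (convex_Ici 0)
  have hanti := hconvex.strictAntiOn_inter_Iic hα0 hlt
  intro a ha b hb hab
  have ha0 := hv''0.trans_le ha.1
  have hb0 := ha0.trans hab
  rw [tauE_lt_tauE_iff hN hC2 ha0 hb0]
  exact hanti ⟨by simpa using one_le_inv₀ hb0 |>.2 hb.2, by
      simpa using (inv_anti₀ ha0 hab.le).trans (inv_anti₀ hv''0 ha.1)⟩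
    ⟨by simpa using one_le_inv₀ ha0 |>.2 (hab.le.trans hb.2), by simpa using inv_anti₀ hv''0 ha.1⟩
    (by simpa using inv_strictAnti₀ ha0 hab)

/-- structure of `τ` and `Ω₀` under Conditions (C1)–(C3):
`Ω₀` is a nonempty closed subinterval `[v′, v″]` of `[1/2, 1]` with `v″ > 1/2`;
`τ(v) > 1` for every `v < 1/2` (in `[0,1)`); and `τ` is strictly decreasing on
`[0, v′]` and strictly increasing on `[v″, 1]`. -/
theorem stmt10 (N : ℝ → ℝ → ℝ) (hN : IsNorm2 N) (hC1 : CondC1 N) (hC2 : CondC2 N)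
    (hC3 : CondC3 N) :
    (Omega0E N).Nonempty ∧
    Omega0E N = Set.Icc (sInf (Omega0E N)) (sSup (Omega0E N)) ∧
    Omega0E N ⊆ Set.Icc (1/2 : ℝ) 1 ∧
    1/2 < sSup (Omega0E N) ∧
    (∀ v : ℝ, 0 ≤ v → v < 1/2 → 1 < tauE N v) ∧
    StrictAntiOn (tauE N) (Set.Icc 0 (sInf (Omega0E N))) ∧
    StrictMonoOn (tauE N) (Set.Icc (sSup (Omega0E N)) 1) := by
  obtain ⟨v, hv, hv_gt⟩ := exists_mem_Omega0E_half_lt hN hC1 hC2 hC3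
  have hsub := Omega0E_subset_Icc hC2
  have hbddBelow : BddBelow (Omega0E N) := ⟨1 / 2, fun _ hx => (hsub hx).1⟩
  have hbddAbove : BddAbove (Omega0E N) := ⟨1, fun _ hx => (hsub hx).2⟩
  have hclosed := isClosed_Omega0E hN hC2
  refine ⟨⟨v, hv⟩, ?_, hsub, hv_gt.trans_le (le_csSup hbddAbove hv),
    fun _ => one_lt_tauE_of_lt_half hC2,
    strictAntiOn_tauE_of_isLeast hN hC2 (hclosed.isLeast_csInf ⟨v, hv⟩ hbddBelow),
    strictMonoOn_tauE_of_isGreatest hN hC2 (hclosed.isGreatest_csSup ⟨v, hv⟩ hbddAbove)⟩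
  exact eq_Icc_csInf_csSup_of_connected_bdd_closed
    ⟨⟨v, hv⟩, (convex_Omega0E hN hC2).isPreconnected⟩ hbddBelow hbddAbove hclosed
end
end
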